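/- arXiv:2311.03343 — 2 statements merged into one kernel-verified Lean document; each statement's English description precedes it below -/
import Mathlib

section
/- Let ((A_{k,m})_{k≥m})_{m≥1} be a doubly-indexed family of random variables defined simultaneously under every P ∈ 𝒫, and let F be the CDF of a real random variable with F Lipschitz (with some constant L) and not depending on P. Suppose lim_{m→∞} sup_{P∈𝒫} sup_{z∈ℝ} | P( sup_{k≥m} A_{k,m} ≥ z ) − (1 − F(z)) | = 0, and let (R_n) satisfy R_n = ō_𝒫(1). Then the additively perturbed suprema have the same uniform limit: lim_{m→∞} sup_{P∈𝒫} sup_{z∈ℝ} | P( sup_{k≥m} (A_{k,m} + R_k) ≥ z ) − (1 − F(z)) | = 0. -/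
/-!
Off the event `{∃ k ≥ m, ε ≤ |R k|}` the perturbed supremum is within `ε` of the unperturbed one,
so its tail probability at `z` is sandwiched, up to the probability of that event, between the
tail probabilities of the unperturbed supremum at `z ± ε`. The Lipschitz bound on `F` turns the
shift `± ε` into an error `L ε`; let `m → ∞`, then `ε → 0`.
-/

open MeasureTheory ProbabilityTheory Filter Set
open scoped NNReal

variable {Ω : Type*} [MeasurableSpace Ω]

theorem Real.abs_iSup_sub_iSup_le {ι : Sort*} {f g : ι → ℝ} {ε : ℝ} (hε : 0 ≤ ε)
    (h : ∀ i, |f i - g i| ≤ ε) : |(⨆ i, f i) - ⨆ i, g i| ≤ ε := by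
  rcases isEmpty_or_nonempty ι with hι | hι
  · simpa [Real.iSup_of_isEmpty] using hε
  by_cases hg : BddAbove (range g)
  · have hf : BddAbove (range f) := by
      obtain ⟨C, hC⟩ := hg
      refine ⟨C + ε, forall_mem_range.2 fun i => ?_⟩
      linarith [(abs_le.1 (h i)).2, hC (mem_range_self i)]
    refine abs_sub_le_iff.2 ⟨sub_le_iff_le_add.2 (ciSup_le fun i => ?_),
      sub_le_iff_le_add.2 (ciSup_le fun i => ?_)⟩
    · linarith [(abs_le.1 (h i)).2, le_ciSup hg i]
    · linarith [(abs_le.1 (h i)).1, le_ciSup hf i]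
  · have hf : ¬BddAbove (range f) := by
      rintro ⟨C, hC⟩
      refine hg ⟨C + ε, forall_mem_range.2 fun i => ?_⟩
      linarith [(abs_le.1 (h i)).1, hC (mem_range_self i)]
    simpa [Real.iSup_of_not_bddAbove hf, Real.iSup_of_not_bddAbove hg] using hε

theorem Real.abs_iSup_ge_sub_iSup_ge_le {f g : ℕ → ℝ} {m : ℕ} {ε : ℝ} (hε : 0 ≤ ε)
    (h : ∀ k ≥ m, |f k - g k| ≤ ε) :
    |(⨆ k, ⨆ _ : m ≤ k, f k) - ⨆ k, ⨆ _ : m ≤ k, g k| ≤ ε :=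
  Real.abs_iSup_sub_iSup_le hε fun k => Real.abs_iSup_sub_iSup_le hε fun hk => h k hk

theorem Real.biSup_nonneg {α : Type*} {s : Set α} {f : α → ℝ} (hf : ∀ a, 0 ≤ f a) :
    0 ≤ ⨆ a ∈ s, f a :=
  Real.iSup_nonneg fun a => Real.iSup_nonneg fun _ => hf a

theorem Real.le_biSup_of_le {α : Type*} {s : Set α} {f : α → ℝ} {C : ℝ}
    (hC : ∀ a ∈ s, f a ≤ C) {a : α} (ha : a ∈ s) : f a ≤ ⨆ a ∈ s, f a := by
  have hbdd : BddAbove (range fun a => ⨆ _ : a ∈ s, f a) :=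
    ⟨max C 0, forall_mem_range.2 fun b =>
      Real.iSup_le (fun hb => (hC b hb).trans (le_max_left _ _)) (le_max_right _ _)⟩
  calc f a = ⨆ _ : a ∈ s, f a := (ciSup_pos (f := fun _ => f a) ha).symm
    _ ≤ ⨆ a ∈ s, f a := le_ciSup hbdd a

theorem Real.le_biSup_iSup_of_le {α β : Type*} {s : Set α} {f : α → β → ℝ} {C : ℝ}
    (hC : ∀ a ∈ s, ∀ b, f a b ≤ C) {a : α} (ha : a ∈ s) (b : β) :
    f a b ≤ ⨆ a ∈ s, ⨆ b, f a b := by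
  have hle : ∀ a ∈ s, ⨆ b, f a b ≤ max C 0 := fun a ha =>
    Real.iSup_le (fun b => (hC a ha b).trans (le_max_left _ _)) (le_max_right _ _)
  exact (le_ciSup ⟨C, forall_mem_range.2 (hC a ha)⟩ b).trans (Real.le_biSup_of_le hle ha)

theorem tendsto_zero_of_forall_le_add_mul {u : ℕ → ℝ} {v : ℝ → ℕ → ℝ} {C : ℝ}
    (hu : ∀ m, 0 ≤ u m) (huv : ∀ ε > 0, ∀ m, u m ≤ v ε m + C * ε)
    (hv : ∀ ε > 0, Tendsto (v ε) atTop (nhds 0)) : Tendsto u atTop (nhds 0) := by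
  refine tendsto_order.2 ⟨fun a ha => Eventually.of_forall fun m => ha.trans_le (hu m),
    fun η hη => ?_⟩
  obtain ⟨ε, hε, hCε⟩ := exists_pos_mul_lt (half_pos hη) C
  filter_upwards [(hv ε hε).eventually (gt_mem_nhds (half_pos hη))] with m hm
  linarith [huv ε hε m]

theorem measureReal_setOf_le_le_add_of_le_add {P : Measure Ω} [IsFiniteMeasure P]
    {X Y : Ω → ℝ} {E : Set Ω} {ε : ℝ} (h : ∀ ω ∉ E, Y ω ≤ X ω + ε) (z : ℝ) :
    P.real {ω | z ≤ Y ω} ≤ P.real {ω | z - ε ≤ X ω} + P.real E := by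
  refine (measureReal_mono fun ω (hω : z ≤ Y ω) => ?_).trans (measureReal_union_le _ _)
  by_cases hE : ω ∈ E
  · exact Or.inr hE
  · exact Or.inl (show z - ε ≤ X ω by linarith [h ω hE])

theorem abs_measureReal_sub_le_of_abs_sub_le {P : Measure Ω} [IsFiniteMeasure P]
    {X Y : Ω → ℝ} {E : Set Ω} {F : ℝ → ℝ} {L : ℝ≥0} {a ε : ℝ} (hε : 0 ≤ ε)
    (hF : LipschitzWith L F)
    (hX : ∀ z, |P.real {ω | z ≤ X ω} - (1 - F z)| ≤ a) (hXY : ∀ ω ∉ E, |Y ω - X ω| ≤ ε)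
    (z : ℝ) : |P.real {ω | z ≤ Y ω} - (1 - F z)| ≤ a + P.real E + L * ε := by
  have hup := measureReal_setOf_le_le_add_of_le_add (P := P) (X := X) (Y := Y) (ε := ε)
    (fun ω hω => by linarith [(abs_le.1 (hXY ω hω)).2]) z
  have hlo := measureReal_setOf_le_le_add_of_le_add (P := P) (X := Y) (Y := X) (ε := ε)
    (fun ω hω => by linarith [(abs_le.1 (hXY ω hω)).1]) (z + ε)
  rw [add_sub_cancel_right] at hlo
  have hFz : ∀ w, |F w - F z| ≤ L * |w - z| := fun w => by
    simpa only [Real.dist_eq] using hF.dist_le_mul w z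
  have h₁ := abs_le.1 (hFz (z - ε))
  have h₂ := abs_le.1 (hFz (z + ε))
  rw [show z - ε - z = -ε by ring, abs_neg, abs_of_nonneg hε] at h₁
  rw [add_sub_cancel_left, abs_of_nonneg hε] at h₂
  have hX₁ := abs_le.1 (hX (z - ε))
  have hX₂ := abs_le.1 (hX (z + ε))
  exact abs_le.2 ⟨by linarith, by linarith⟩

/-- Time-uniform closure under additive `ō_𝒫(1)`-perturbations
(Lemma `lemma:uniform-convergence-to-Lipschitz-distributions-inside-supremum`). -/
theorem uniform_convergence_additive_perturbation
    (Ps : Set (Measure Ω))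
    (hprob : ∀ P ∈ Ps, IsProbabilityMeasure P)
    (A : ℕ → ℕ → Ω → ℝ) (R : ℕ → Ω → ℝ)
    (F : ℝ → ℝ) (L : ℝ≥0)
    -- `F` is a Lipschitz CDF of a real random variable, not depending on `P`
    (hLip : LipschitzWith L F)
    (hCDF : ∃ μ : Measure ℝ, IsProbabilityMeasure μ ∧ ∀ z, F z = (μ (Set.Iic z)).toReal)
    -- `(𝒫, m, z)`-uniform convergence of the unperturbed suprema
    (hconv : Tendsto (fun m : ℕ =>
        ⨆ P ∈ Ps, ⨆ z : ℝ,
          |(P {ω | z ≤ ⨆ k : ℕ, ⨆ _ : m ≤ k, A m k ω}).toReal - (1 - F z)|)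
      atTop (nhds 0))
    -- `R_n = ō_𝒫(1)`
    (hR : ∀ ε : ℝ, 0 < ε →
      Tendsto (fun m : ℕ => ⨆ P ∈ Ps, (P {ω | ∃ k ≥ m, ε ≤ |R k ω|}).toReal)
        atTop (nhds 0)) :
    Tendsto (fun m : ℕ =>
        ⨆ P ∈ Ps, ⨆ z : ℝ,
          |(P {ω | z ≤ ⨆ k : ℕ, ⨆ _ : m ≤ k, (A m k ω + R k ω)}).toReal - (1 - F z)|)
      atTop (nhds 0) := by
  obtain ⟨μ, hμ, hFμ⟩ := hCDF
  -- These bounds keep the real suprema below bounded: an unbounded real `⨆` is `0`.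
  have hdev : ∀ P ∈ Ps, ∀ (s : Set Ω) (z : ℝ), |P.real s - (1 - F z)| ≤ 1 := by
    intro P hP s z
    have := hprob P hP
    have hF0 : 0 ≤ F z := hFμ z ▸ measureReal_nonneg
    have hF1 : F z ≤ 1 := hFμ z ▸ measureReal_le_one
    exact abs_sub_le_of_nonneg_of_le measureReal_nonneg measureReal_le_one
      (by linarith) (by linarith)
  have hbad : ∀ ε m, ∀ P ∈ Ps, P.real {ω | ∃ k ≥ m, ε ≤ |R k ω|} ≤ 1 :=
    fun ε m P hP => haveI := hprob P hP; measureReal_le_one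
  refine tendsto_zero_of_forall_le_add_mul (C := L)
    (fun m => Real.biSup_nonneg fun P => Real.iSup_nonneg fun z => abs_nonneg _)
    (fun ε hε m => ?_) (fun ε hε => by simpa using hconv.add (hR ε hε))
  refine Real.iSup_le (fun P => Real.iSup_le (fun hP => Real.iSup_le (fun z => ?_) ?_) ?_) ?_
  · have := hprob P hP
    have hclose : ∀ ω ∉ {ω | ∃ k ≥ m, ε ≤ |R k ω|},
        |(⨆ k : ℕ, ⨆ _ : m ≤ k, (A m k ω + R k ω)) - ⨆ k : ℕ, ⨆ _ : m ≤ k, A m k ω| ≤ ε := by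
      intro ω hω
      replace hω : ∀ k ≥ m, |R k ω| < ε := by simpa using hω
      exact Real.abs_iSup_ge_sub_iSup_ge_le hε.le fun k hk => by
        simpa only [add_sub_cancel_left] using (hω k hk).le
    have hA := Real.le_biSup_iSup_of_le (fun P hP z => hdev P hP _ z) hP
      (f := fun P z => |P.real {ω | z ≤ ⨆ k : ℕ, ⨆ _ : m ≤ k, A m k ω} - (1 - F z)|)
    exact (abs_measureReal_sub_le_of_abs_sub_le hε.le hLip hA hclose z).trans
      (add_le_add_three le_rfl (Real.le_biSup_of_le (hbad ε m) hP) le_rfl)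
  all_goals exact add_nonneg (add_nonneg
    (Real.biSup_nonneg fun _ => Real.iSup_nonneg fun _ => abs_nonneg _)
    (Real.biSup_nonneg fun _ => ENNReal.toReal_nonneg)) (by positivity)
end

section
/- Let ((A_{k,m})_{k≥m})_{m≥1} be a doubly-indexed family of random variables defined simultaneously under every P ∈ 𝒫, and let F be a continuous CDF of a real random variable not depending on P. Suppose lim_{m→∞} sup_{P∈𝒫} sup_{x∈ℝ} | P( sup_{k≥m} A_{k,m} ≤ x ) − F(x) | = 0, and let (R_n) satisfy R_n = ō_𝒫(1). Then the multiplicatively perturbed suprema have the same uniform limit: lim_{m→∞} sup_{P∈𝒫} sup_{x∈ℝ} | P( sup_{k≥m} ( A_{k,m} / (1 + R_k) ) ≤ x ) − F(x) | = 0. -/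
/-!
Off the event that `|R k| ≥ ε` for some `k ≥ m`, every factor `1 + R k` with `k ≥ m` lies in
`(1 - ε, 1 + ε)`, so the perturbed supremum `Y` and the unperturbed one `X` satisfy
`(1 - ε) Y ≤ X ≤ (1 + ε) Y`. Hence `P (Y ≤ x)` lies between `P (X ≤ (1 - ε) x)` and
`P (X ≤ (1 + ε) x)` up to the probability of that event, and these are uniformly close to
`F ((1 ∓ ε) x)`. Finally a continuous CDF is uniformly continuous under the dilations
`x ↦ (1 + t) x` as `t → 0`: uniform continuity on a compact interval handles bounded `x`,
and for large `|x|` both points lie in a tail where `F` is nearly constant.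
-/

open MeasureTheory ProbabilityTheory Filter Set

variable {Ω : Type*} [MeasurableSpace Ω]

open Topology

/-- Since `Real.iSup` is `0` on families that are not bounded above, and the terms with `k < m`
are `0`, for `m > 0` this is `max 0 (sup_{k ≥ m} a k)` if `a` is bounded above on `[m, ∞)`,
and `0` otherwise. -/
noncomputable def tailSup (m : ℕ) (a : ℕ → ℝ) : ℝ := ⨆ k, ⨆ _ : m ≤ k, a k

section tailSup

variable {m k : ℕ} {a b : ℕ → ℝ} {x c c' : ℝ}

lemma bddAbove_range_tail_iff :
    BddAbove (range fun k => ⨆ _ : m ≤ k, a k) ↔ BddAbove (a '' Ici m) := by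
  constructor
  · rintro ⟨B, hB⟩
    refine ⟨B, ?_⟩
    rintro _ ⟨k, hk, rfl⟩
    simpa [ciSup_pos (show m ≤ k from hk)] using hB ⟨k, rfl⟩
  · rintro ⟨B, hB⟩
    refine ⟨max B 0, ?_⟩
    rintro _ ⟨k, rfl⟩
    by_cases hk : m ≤ k
    · simpa [ciSup_pos hk] using Or.inl (hB ⟨k, hk, rfl⟩)
    · simp [hk]

lemma tailSup_nonneg (hm : 0 < m) : 0 ≤ tailSup m a :=
  Real.iSup_nonneg' ⟨0, by simp [show ¬ m ≤ 0 by omega]⟩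

lemma tailSup_of_not_bddAbove (ha : ¬ BddAbove (a '' Ici m)) : tailSup m a = 0 :=
  Real.iSup_of_not_bddAbove (bddAbove_range_tail_iff.not.2 ha)

lemma le_tailSup (ha : BddAbove (a '' Ici m)) (hk : m ≤ k) : a k ≤ tailSup m a := by
  simpa [tailSup, ciSup_pos hk] using le_ciSup (bddAbove_range_tail_iff.2 ha) k

lemma tailSup_le (hx : 0 ≤ x) (h : ∀ k ≥ m, a k ≤ x) : tailSup m a ≤ x :=
  Real.iSup_le (fun k => Real.iSup_le (h k) hx) hx

lemma BddAbove.image_of_le_mul_max {ι : Type*} {s : Set ι} {f g : ι → ℝ} (hg : BddAbove (g '' s))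
    (hc : 0 ≤ c) (h : ∀ i ∈ s, f i ≤ c * max (g i) 0) : BddAbove (f '' s) := by
  obtain ⟨B, hB⟩ := hg
  refine ⟨c * max B 0, ?_⟩
  rintro _ ⟨i, hi, rfl⟩
  exact (h i hi).trans (by gcongr; exact hB ⟨i, hi, rfl⟩)

lemma tailSup_le_mul (hm : 0 < m) (hc : 0 ≤ c) (hc' : 0 ≤ c')
    (hba : ∀ k ≥ m, b k ≤ c * max (a k) 0) (hab : ∀ k ≥ m, a k ≤ c' * max (b k) 0) :
    tailSup m b ≤ c * tailSup m a := by
  by_cases ha : BddAbove (a '' Ici m)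
  · refine tailSup_le (mul_nonneg hc (tailSup_nonneg hm)) fun k hk => (hba k hk).trans ?_
    gcongr
    exact max_le (le_tailSup ha hk) (tailSup_nonneg hm)
  · have hb : ¬ BddAbove (b '' Ici m) := fun hb => ha (hb.image_of_le_mul_max hc' hab)
    rw [tailSup_of_not_bddAbove ha, tailSup_of_not_bddAbove hb, mul_zero]

end tailSup

section Perturbation

variable {ε : ℝ}

lemma le_mul_max_div_one_add {a r : ℝ} (hr : |r| < ε) (hε : ε < 1) :
    a ≤ (1 + ε) * max (a / (1 + r)) 0 := by
  obtain ⟨hr₁, hr₂⟩ := abs_lt.1 hr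
  have hpos : 0 < 1 + r := by linarith
  calc a = (1 + r) * (a / (1 + r)) := by field_simp
    _ ≤ (1 + r) * max (a / (1 + r)) 0 := by gcongr; exact le_max_left _ _
    _ ≤ (1 + ε) * max (a / (1 + r)) 0 := by gcongr

lemma div_one_add_le_mul_max {a r : ℝ} (hr : |r| < ε) (hε : ε < 1) :
    a / (1 + r) ≤ (1 - ε)⁻¹ * max a 0 := by
  obtain ⟨hr₁, hr₂⟩ := abs_lt.1 hr
  have hpos : 0 < 1 - ε := by linarith
  have hpos' : 0 < 1 + r := by linarith
  rw [inv_mul_eq_div]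
  calc a / (1 + r) ≤ max a 0 / (1 + r) := by gcongr; exact le_max_left a 0
    _ ≤ max a 0 / (1 - ε) := by gcongr; linarith

lemma tailSup_div_one_add_sandwich {m : ℕ} {a r : ℕ → ℝ} (hm : 0 < m) (hε : ε < 1)
    (hr : ∀ k ≥ m, |r k| < ε) :
    (1 - ε) * tailSup m (fun k => a k / (1 + r k)) ≤ tailSup m a ∧
      tailSup m a ≤ (1 + ε) * tailSup m (fun k => a k / (1 + r k)) := by
  have hε₀ : 0 ≤ ε := (abs_nonneg _).trans (hr m le_rfl).le
  have hdiv := fun k hk => div_one_add_le_mul_max (a := a k) (hr k hk) hε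
  have hmul := fun k hk => le_mul_max_div_one_add (a := a k) (hr k hk) hε
  constructor
  · have := tailSup_le_mul hm (inv_nonneg.2 (sub_nonneg.2 hε.le)) (by linarith) hdiv hmul
    rwa [← inv_mul_le_iff₀ (inv_pos.2 (sub_pos.2 hε)), inv_inv] at this
  · exact tailSup_le_mul hm (by linarith) (inv_nonneg.2 (sub_nonneg.2 hε.le)) hmul hdiv

end Perturbation

theorem tendstoUniformly_comp_one_add_mul {F : ℝ → ℝ} {l u : ℝ} (hF : Continuous F)
    (hbot : Tendsto F atBot (𝓝 l)) (htop : Tendsto F atTop (𝓝 u)) :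
    TendstoUniformly (fun t x => F ((1 + t) * x)) F (𝓝 0) := by
  rw [Metric.tendstoUniformly_iff]
  intro δ hδ
  obtain ⟨M₁, hM₁⟩ := Metric.cauchySeq_iff.1 htop.cauchySeq δ hδ
  obtain ⟨M₂, hM₂⟩ := Metric.cauchySeq_iff.1 (hbot.comp tendsto_neg_atTop_atBot).cauchySeq δ hδ
  set M := max 1 (max M₁ M₂)
  have hM : 0 < M := lt_max_of_lt_left one_pos
  have hM₁M : M₁ ≤ M := (le_max_left _ _).trans (le_max_right _ _)
  have hM₂M : M₂ ≤ M := (le_max_right _ _).trans (le_max_right _ _)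
  obtain ⟨η, hη, hunif⟩ := Metric.uniformContinuousOn_iff.1
    ((isCompact_closedBall (0 : ℝ) (3 * M)).uniformContinuousOn_of_continuous
      hF.continuousOn) δ hδ
  filter_upwards [Metric.ball_mem_nhds (0 : ℝ) (by positivity : 0 < min (1 / 2) (η / (2 * M)))]
    with t ht x
  rw [mem_ball_zero_iff, Real.norm_eq_abs] at ht
  have ht₁ : |t| < 1 / 2 := ht.trans_le (min_le_left _ _)
  have ht₂ : |t| * (2 * M) < η := (lt_div_iff₀ (by positivity)).1 (ht.trans_le (min_le_right _ _))
  obtain ⟨ht₁l, ht₁r⟩ := abs_lt.1 ht₁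
  rcases le_or_gt |x| (2 * M) with hx | hx
  · have hdist : dist x ((1 + t) * x) < η := by
      rw [Real.dist_eq, show x - (1 + t) * x = -(t * x) by ring, abs_neg, abs_mul]
      nlinarith [abs_nonneg t, abs_nonneg x]
    have hxI : x ∈ Metric.closedBall 0 (3 * M) := by
      rw [mem_closedBall_zero_iff, Real.norm_eq_abs]
      linarith
    have htxI : (1 + t) * x ∈ Metric.closedBall 0 (3 * M) := by
      rw [mem_closedBall_zero_iff, Real.norm_eq_abs, abs_mul]
      have : |1 + t| ≤ 3 / 2 := abs_le.2 ⟨by linarith, by linarith⟩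
      nlinarith [abs_nonneg x, abs_nonneg (1 + t)]
    exact hunif x hxI _ htxI hdist
  · rcases lt_abs.1 hx with hx | hx
    · exact hM₁ x (by linarith) _ (by nlinarith)
    · simpa using hM₂ (-x) (by linarith) (-((1 + t) * x)) (by nlinarith)

lemma TendstoUniformly.exists_mem_Ioo_forall_abs_sub_le {F : ℝ → ℝ}
    (h : TendstoUniformly (fun t x => F ((1 + t) * x)) F (𝓝 0)) {δ : ℝ} (hδ : 0 < δ) :
    ∃ ε ∈ Ioo (0 : ℝ) 1, ∀ x, |F x - F ((1 + ε) * x)| ≤ δ ∧ |F x - F ((1 - ε) * x)| ≤ δ := by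
  obtain ⟨ρ, hρ, hρF⟩ := Metric.eventually_nhds_iff.1 (Metric.tendstoUniformly_iff.1 h δ hδ)
  have hε : |min (ρ / 2) (1 / 2)| < ρ := by
    rw [abs_of_pos (by positivity)]
    exact (min_le_left _ _).trans_lt (half_lt_self hρ)
  refine ⟨min (ρ / 2) (1 / 2), ⟨by positivity, (min_le_right _ _).trans_lt (by norm_num)⟩,
    fun x => ⟨?_, ?_⟩⟩
  · exact (hρF (by rwa [Real.dist_0_eq_abs]) x).le
  · rw [sub_eq_add_neg]
    exact (hρF (by rwa [Real.dist_0_eq_abs, abs_neg]) x).le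

lemma abs_measureReal_sub_le_of_sandwich {P : Measure Ω} [IsFiniteMeasure P] {X Y : Ω → ℝ}
    {B : Set Ω} {F : ℝ → ℝ} {ε D δ : ℝ} (hε₀ : 0 ≤ ε) (hε₁ : ε < 1)
    (hXY : ∀ ω ∉ B, (1 - ε) * Y ω ≤ X ω ∧ X ω ≤ (1 + ε) * Y ω)
    (hX : ∀ y, |P.real {ω | X ω ≤ y} - F y| ≤ D)
    (hF : ∀ x, |F x - F ((1 + ε) * x)| ≤ δ ∧ |F x - F ((1 - ε) * x)| ≤ δ) (x : ℝ) :
    |P.real {ω | Y ω ≤ x} - F x| ≤ D + δ + P.real B := by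
  have hup : P.real {ω | Y ω ≤ x} ≤ P.real {ω | X ω ≤ (1 + ε) * x} + P.real B := by
    refine (measureReal_mono fun ω (hω : Y ω ≤ x) => ?_).trans (measureReal_union_le _ _)
    by_cases hB : ω ∈ B
    · exact Or.inr hB
    · exact Or.inl ((hXY ω hB).2.trans (by gcongr))
  have hdown : P.real {ω | X ω ≤ (1 - ε) * x} ≤ P.real {ω | Y ω ≤ x} + P.real B := by
    refine (measureReal_mono fun ω (hω : X ω ≤ (1 - ε) * x) => ?_).trans (measureReal_union_le _ _)
    by_cases hB : ω ∈ B
    · exact Or.inr hB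
    · exact Or.inl (le_of_mul_le_mul_left ((hXY ω hB).1.trans hω) (by linarith))
  have h_add := abs_le.1 (hX ((1 + ε) * x))
  have h_sub := abs_le.1 (hX ((1 - ε) * x))
  have hF_add := abs_le.1 (hF x).1
  have hF_sub := abs_le.1 (hF x).2
  exact abs_le.2 ⟨by linarith, by linarith⟩

lemma le_biSup_of_forall_le {α : Type*} {s : Set α} {f : α → ℝ} {C : ℝ} (hf : ∀ a ∈ s, f a ≤ C)
    {a : α} (ha : a ∈ s) : f a ≤ ⨆ b ∈ s, f b := by
  have hbdd : BddAbove (range fun b => ⨆ _ : b ∈ s, f b) := by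
    refine ⟨max C 0, ?_⟩
    rintro _ ⟨b, rfl⟩
    exact Real.iSup_le (fun hb => (hf b hb).trans (le_max_left _ _)) (le_max_right _ _)
  simpa [ciSup_pos ha] using le_ciSup hbdd a

noncomputable def uniformKolmogorovDist (Ps : Set (Measure Ω)) (X : Ω → ℝ) (F : ℝ → ℝ) : ℝ :=
  ⨆ P ∈ Ps, ⨆ x : ℝ, |P.real {ω | X ω ≤ x} - F x|

lemma uniformKolmogorovDist_nonneg (Ps : Set (Measure Ω)) (X : Ω → ℝ) (F : ℝ → ℝ) :
    0 ≤ uniformKolmogorovDist Ps X F :=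
  Real.iSup_nonneg fun _ => Real.iSup_nonneg fun _ => Real.iSup_nonneg fun _ => abs_nonneg _

lemma abs_measureReal_sub_le_uniformKolmogorovDist {Ps : Set (Measure Ω)}
    (hprob : ∀ P ∈ Ps, IsProbabilityMeasure P) {X : Ω → ℝ} {F : ℝ → ℝ}
    (hF01 : ∀ x, F x ∈ Icc 0 1) {P : Measure Ω} (hP : P ∈ Ps) (x : ℝ) :
    |P.real {ω | X ω ≤ x} - F x| ≤ uniformKolmogorovDist Ps X F := by
  have hle_one : ∀ Q ∈ Ps, ∀ y, |Q.real {ω | X ω ≤ y} - F y| ≤ 1 := fun Q hQ y => by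
    have := hprob Q hQ
    exact abs_sub_le_of_nonneg_of_le measureReal_nonneg measureReal_le_one (hF01 y).1 (hF01 y).2
  refine le_trans ?_
    (le_biSup_of_forall_le (fun Q hQ => Real.iSup_le (hle_one Q hQ) zero_le_one) hP)
  exact le_ciSup (f := fun y => |P.real {ω | X ω ≤ y} - F y|)
    ⟨1, by rintro _ ⟨y, rfl⟩; exact hle_one P hP y⟩ x

lemma uniformKolmogorovDist_le_of_sandwich {Ps : Set (Measure Ω)}
    (hprob : ∀ P ∈ Ps, IsProbabilityMeasure P) {X Y : Ω → ℝ} {B : Set Ω} {F : ℝ → ℝ}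
    (hF01 : ∀ x, F x ∈ Icc 0 1) {ε δ : ℝ} (hε₀ : 0 ≤ ε) (hε₁ : ε < 1)
    (hXY : ∀ ω ∉ B, (1 - ε) * Y ω ≤ X ω ∧ X ω ≤ (1 + ε) * Y ω)
    (hF : ∀ x, |F x - F ((1 + ε) * x)| ≤ δ ∧ |F x - F ((1 - ε) * x)| ≤ δ) :
    uniformKolmogorovDist Ps Y F ≤ uniformKolmogorovDist Ps X F + δ + ⨆ P ∈ Ps, P.real B := by
  have hnonneg : 0 ≤ uniformKolmogorovDist Ps X F + δ + ⨆ P ∈ Ps, P.real B :=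
    add_nonneg (add_nonneg (uniformKolmogorovDist_nonneg _ _ _) ((abs_nonneg _).trans (hF 0).1))
      (Real.iSup_nonneg fun _ => Real.iSup_nonneg fun _ => measureReal_nonneg)
  refine Real.iSup_le (fun P => Real.iSup_le (fun hP => Real.iSup_le (fun x => ?_) hnonneg) hnonneg)
    hnonneg
  have := hprob P hP
  refine (abs_measureReal_sub_le_of_sandwich hε₀ hε₁ hXY
    (abs_measureReal_sub_le_uniformKolmogorovDist hprob hF01 hP) hF x).trans ?_
  gcongr
  exact le_biSup_of_forall_le (f := fun P : Measure Ω => P.real B)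
    (fun Q hQ => by have := hprob Q hQ; exact measureReal_le_one) hP

/-- Time-uniform closure under multiplicative `ō_𝒫(1)`-perturbations
(Lemma `lemma:uniform-convergence-to-RS-distributions-multiplicative-inside-suprema`). -/
theorem uniform_convergence_multiplicative_perturbation
    (Ps : Set (Measure Ω))
    (hprob : ∀ P ∈ Ps, IsProbabilityMeasure P)
    (A : ℕ → ℕ → Ω → ℝ) (R : ℕ → Ω → ℝ)
    (F : ℝ → ℝ)
    -- `F` is a continuous CDF of a real random variable, not depending on `P`
    (hFcont : Continuous F)
    (hCDF : ∃ μ : Measure ℝ, IsProbabilityMeasure μ ∧ ∀ x, F x = (μ (Set.Iic x)).toReal)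
    -- `(𝒫, m, x)`-uniform convergence of the unperturbed suprema
    (hconv : Tendsto (fun m : ℕ =>
        ⨆ P ∈ Ps, ⨆ x : ℝ,
          |(P {ω | (⨆ k : ℕ, ⨆ _ : m ≤ k, A m k ω) ≤ x}).toReal - F x|)
      atTop (nhds 0))
    -- `R_n = ō_𝒫(1)`
    (hR : ∀ ε : ℝ, 0 < ε →
      Tendsto (fun m : ℕ => ⨆ P ∈ Ps, (P {ω | ∃ k ≥ m, ε ≤ |R k ω|}).toReal)
        atTop (nhds 0)) :
    Tendsto (fun m : ℕ =>
        ⨆ P ∈ Ps, ⨆ x : ℝ,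
          |(P {ω | (⨆ k : ℕ, ⨆ _ : m ≤ k, A m k ω / (1 + R k ω)) ≤ x}).toReal - F x|)
      atTop (nhds 0) := by
  obtain ⟨μ, hμ, hFμ⟩ := hCDF
  obtain rfl : F = cdf μ := funext fun x => (hFμ x).trans (cdf_eq_real μ x).symm
  have hF01 (x : ℝ) : cdf μ x ∈ Icc 0 1 := ⟨cdf_nonneg μ x, cdf_le_one μ x⟩
  have hunif := tendstoUniformly_comp_one_add_mul hFcont (tendsto_cdf_atBot μ) (tendsto_cdf_atTop μ)
  refine tendsto_order.2 ⟨fun a ha => .of_forall fun m =>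
    ha.trans_le (uniformKolmogorovDist_nonneg _ _ _), fun a ha => ?_⟩
  have ha3 : 0 < a / 3 := by positivity
  obtain ⟨ε, ⟨hε₀, hε₁⟩, hmod⟩ := hunif.exists_mem_Ioo_forall_abs_sub_le ha3
  filter_upwards [eventually_gt_atTop 0, hconv.eventually (gt_mem_nhds ha3),
    (hR ε hε₀).eventually (gt_mem_nhds ha3)] with m hm hD hE
  have hXY (ω) (hω : ω ∉ {ω | ∃ k ≥ m, ε ≤ |R k ω|}) :=
    tailSup_div_one_add_sandwich (a := (A m · ω)) hm hε₁ (by simpa using hω)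
  calc _ ≤ _ := uniformKolmogorovDist_le_of_sandwich hprob hF01 hε₀.le hε₁ hXY hmod
    _ < a / 3 + a / 3 + a / 3 := by gcongr; exacts [hD, hE]
    _ = a := by ring
end
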